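/- Let Ω ⊂ ℂⁿ be a bounded domain, m ≥ 1, and let d be a metric on Ω such that for some constant C₀ > 0 and all x, y ∈ Ω: g_m(x,y) − C₀ ≤ d(x,y) ≤ g_1(x,y) + C₀. Fix a base point ω ∈ Ω. Then there exist constants C₁, C₂ > 0 such that for all boundary points a, b ∈ ∂Ω and all sequences (x_k), (y_k) in Ω with x_k → a and y_k → b in the Euclidean metric: exp( − limsup_k (x_k|y_k)_ω ) ≥ |a−b|^m / C₂ and exp( − liminf_k (x_k|y_k)_ω ) ≤ |a−b| / C₁. -/

import Mathlib

open Set Metric Filter Bornology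
open scoped Topology

noncomputable section

/-- The Euclidean distance from a point to the boundary of `Ω`. -/
def bdist {n : ℕ} (Ω : Set (EuclideanSpace ℂ (Fin n))) (z : EuclideanSpace ℂ (Fin n)) : ℝ :=
  Metric.infDist z (frontier Ω)

/-- `g_k(x,y) = 2 log((|x−y|^k + max(δ(x),δ(y)))/√(δ(x)δ(y)))`. -/
def gK {n : ℕ} (Ω : Set (EuclideanSpace ℂ (Fin n))) (k : ℝ)
    (x y : EuclideanSpace ℂ (Fin n)) : ℝ :=
  2 * Real.log ((dist x y ^ k + max (bdist Ω x) (bdist Ω y)) /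
    Real.sqrt (bdist Ω x * bdist Ω y))

/-- `d` restricted to `Ω` satisfies the axioms of a metric. -/
def IsMetricOn {n : ℕ} (Ω : Set (EuclideanSpace ℂ (Fin n)))
    (d : EuclideanSpace ℂ (Fin n) → EuclideanSpace ℂ (Fin n) → ℝ) : Prop :=
  (∀ x ∈ Ω, d x x = 0) ∧ (∀ x ∈ Ω, ∀ y ∈ Ω, x ≠ y → 0 < d x y) ∧
  (∀ x ∈ Ω, ∀ y ∈ Ω, d x y = d y x) ∧
  (∀ x ∈ Ω, ∀ y ∈ Ω, ∀ z ∈ Ω, d x z ≤ d x y + d y z)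

/-- The Gromov product `(x|y)_w = (d(x,w) + d(y,w) − d(x,y))/2`. -/
def gromovProd {n : ℕ} (d : EuclideanSpace ℂ (Fin n) → EuclideanSpace ℂ (Fin n) → ℝ)
    (w x y : EuclideanSpace ℂ (Fin n)) : ℝ :=
  (d x w + d y w - d x y) / 2

lemma gK_eq {n : ℕ} (Ω : Set (EuclideanSpace ℂ (Fin n))) (k : ℝ)
    (x y : EuclideanSpace ℂ (Fin n)) (hx : 0 < bdist Ω x) (hy : 0 < bdist Ω y) :
    gK Ω k x y = 2 * Real.log (dist x y ^ k + max (bdist Ω x) (bdist Ω y))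
      - Real.log (bdist Ω x) - Real.log (bdist Ω y) := by
  have hN : 0 < dist x y ^ k + max (bdist Ω x) (bdist Ω y) :=
    add_pos_of_nonneg_of_pos (Real.rpow_nonneg dist_nonneg _) (lt_max_iff.2 (Or.inl hx))
  have hs : 0 < Real.sqrt (bdist Ω x * bdist Ω y) := Real.sqrt_pos.2 (mul_pos hx hy)
  rw [gK, Real.log_div hN.ne' hs.ne', Real.log_sqrt (mul_pos hx hy).le,
    Real.log_mul hx.ne' hy.ne']
  ring

/-- boundary bi-Hölder estimate on Gromov products, proof of Theorem
1.1. If a metric `d` on a bounded domain `Ω ⊂ ℂⁿ` satisfies `g_m − C₀ ≤ d ≤ g_1 + C₀`,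
then there are `C₁, C₂ > 0` such that for all `a, b ∈ ∂Ω` and all sequences `x_k → a`,
`y_k → b` in `Ω`: `exp(−limsup_k (x_k|y_k)_ω) ≥ |a−b|^m/C₂` and
`exp(−liminf_k (x_k|y_k)_ω) ≤ |a−b|/C₁` (limits superior/inferior taken in `EReal`, with
the exponential `EReal.exp : EReal → ℝ≥0∞`). -/
theorem statement15 {n : ℕ} (Ω : Set (EuclideanSpace ℂ (Fin n)))
    (hΩo : IsOpen Ω) (hΩc : IsConnected Ω) (hΩb : IsBounded Ω)
    (m : ℝ) (hm : 1 ≤ m)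
    (d : EuclideanSpace ℂ (Fin n) → EuclideanSpace ℂ (Fin n) → ℝ)
    (hd : IsMetricOn Ω d)
    (C₀ : ℝ) (hC₀ : 0 < C₀)
    (hlow : ∀ x ∈ Ω, ∀ y ∈ Ω, gK Ω m x y - C₀ ≤ d x y)
    (hup : ∀ x ∈ Ω, ∀ y ∈ Ω, d x y ≤ gK Ω 1 x y + C₀)
    (ω : EuclideanSpace ℂ (Fin n)) (hω : ω ∈ Ω) :
    ∃ C₁ > (0 : ℝ), ∃ C₂ > (0 : ℝ),
      ∀ a ∈ frontier Ω, ∀ b ∈ frontier Ω,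
      ∀ x y : ℕ → EuclideanSpace ℂ (Fin n), (∀ k, x k ∈ Ω) → (∀ k, y k ∈ Ω) →
      Tendsto x atTop (nhds a) → Tendsto y atTop (nhds b) →
      EReal.exp (-limsup (fun k => (gromovProd d ω (x k) (y k) : EReal)) atTop) ≥
        ENNReal.ofReal (dist a b ^ m / C₂) ∧
      EReal.exp (-liminf (fun k => (gromovProd d ω (x k) (y k) : EReal)) atTop) ≤
        ENNReal.ofReal (dist a b / C₁) := by
  classical
  obtain ⟨R0, hR0⟩ := hΩb.subset_closedBall ω
  set R : ℝ := max R0 0 with hRdef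
  have hRnn : (0:ℝ) ≤ R := le_max_right _ _
  have hRbd : ∀ z ∈ Ω, dist z ω ≤ R := fun z hz =>
    le_trans (mem_closedBall.1 (hR0 hz)) (le_max_left _ _)
  have hδωnn : (0:ℝ) ≤ bdist Ω ω := infDist_nonneg
  set B : ℝ := 2 * R + bdist Ω ω + 1 with hBdef
  have hBpos : (0:ℝ) < B := by linarith
  set C₂ : ℝ := Real.exp (2 * Real.log B - Real.log (bdist Ω ω) + 3 * C₀ / 2
      + m * Real.log 2) with hC₂def
  set C₁ : ℝ := Real.exp (Real.log (bdist Ω ω) - Real.log 2 - 3 * C₀ / 2) with hC₁def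
  refine ⟨C₁, Real.exp_pos _, C₂, Real.exp_pos _, ?_⟩
  intro a ha b hb x y hxΩ hyΩ hx hy
  -- basic positivity
  have hfr : (frontier Ω).Nonempty := ⟨a, ha⟩
  have hδpos : ∀ z ∈ Ω, 0 < bdist Ω z := by
    intro z hz
    refine (isClosed_frontier.notMem_iff_infDist_pos hfr).1 ?_
    intro h
    rw [hΩo.frontier_eq] at h
    exact h.2 hz
  have hδω : 0 < bdist Ω ω := hδpos ω hω
  -- pointwise upper bound on the Gromov product
  have keyU : ∀ u ∈ Ω, ∀ v ∈ Ω,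
      gromovProd d ω u v ≤ Real.log (dist u ω + max (bdist Ω u) (bdist Ω ω))
        + Real.log (dist v ω + max (bdist Ω v) (bdist Ω ω))
        - Real.log (dist u v ^ m + max (bdist Ω u) (bdist Ω v))
        - Real.log (bdist Ω ω) + 3 * C₀ / 2 := by
    intro u hu v hv
    have h1 := hup u hu ω hω
    have h2 := hup v hv ω hω
    have h3 := hlow u hu v hv
    rw [gK_eq Ω 1 u ω (hδpos u hu) hδω, Real.rpow_one] at h1
    rw [gK_eq Ω 1 v ω (hδpos v hv) hδω, Real.rpow_one] at h2
    rw [gK_eq Ω m u v (hδpos u hu) (hδpos v hv)] at h3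
    rw [gromovProd]
    linarith
  -- pointwise lower bound on the Gromov product
  have keyL : ∀ u ∈ Ω, ∀ v ∈ Ω,
      Real.log (bdist Ω ω)
        - Real.log (dist u v + max (bdist Ω u) (bdist Ω v)) - 3 * C₀ / 2
        ≤ gromovProd d ω u v := by
    intro u hu v hv
    have h1 := hlow u hu ω hω
    have h2 := hlow v hv ω hω
    have h3 := hup u hu v hv
    rw [gK_eq Ω m u ω (hδpos u hu) hδω] at h1
    rw [gK_eq Ω m v ω (hδpos v hv) hδω] at h2
    rw [gK_eq Ω 1 u v (hδpos u hu) (hδpos v hv), Real.rpow_one] at h3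
    have hb1 : Real.log (bdist Ω ω) ≤ Real.log (dist u ω ^ m + max (bdist Ω u) (bdist Ω ω)) :=
      Real.log_le_log hδω (le_trans (le_max_right _ _)
        (le_add_of_nonneg_left (Real.rpow_nonneg dist_nonneg m)))
    have hb2 : Real.log (bdist Ω ω) ≤ Real.log (dist v ω ^ m + max (bdist Ω v) (bdist Ω ω)) :=
      Real.log_le_log hδω (le_trans (le_max_right _ _)
        (le_add_of_nonneg_left (Real.rpow_nonneg dist_nonneg m)))
    rw [gromovProd]
    linarith
  -- limits of distances
  have hdist : Tendsto (fun k => dist (x k) (y k)) atTop (𝓝 (dist a b)) := hx.dist hy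
  have hδxa : Tendsto (fun k => bdist Ω (x k)) atTop (𝓝 0) := by
    have h0 : Metric.infDist a (frontier Ω) = 0 := infDist_zero_of_mem ha
    have := ((continuous_infDist_pt (frontier Ω)).tendsto a).comp hx
    simpa [bdist, Function.comp_def, h0] using this
  have hδyb : Tendsto (fun k => bdist Ω (y k)) atTop (𝓝 0) := by
    have h0 : Metric.infDist b (frontier Ω) = 0 := infDist_zero_of_mem hb
    have := ((continuous_infDist_pt (frontier Ω)).tendsto b).comp hy
    simpa [bdist, Function.comp_def, h0] using this
  have hmaxδ : Tendsto (fun k => max (bdist Ω (x k)) (bdist Ω (y k))) atTop (𝓝 0) := by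
    simpa using hδxa.max hδyb
  constructor
  · -- limsup estimate
    rcases eq_or_ne (dist a b) 0 with hr | hr
    · rw [hr, Real.zero_rpow (by linarith : m ≠ 0), zero_div, ENNReal.ofReal_zero]
      exact zero_le
    · have hrpos : 0 < dist a b := lt_of_le_of_ne dist_nonneg (Ne.symm hr)
      have hev : ∀ᶠ k in atTop,
          gromovProd d ω (x k) (y k) ≤ Real.log C₂ - m * Real.log (dist a b) := by
        filter_upwards [hdist.eventually
          (eventually_ge_nhds (by linarith : dist a b / 2 < dist a b))] with k hk
        have hu := hxΩ k; have hv := hyΩ k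
        refine le_trans (keyU _ hu _ hv) ?_
        have hmaxb : ∀ w ∈ Ω, max (bdist Ω w) (bdist Ω ω) ≤ bdist Ω ω + R := by
          intro w hw
          refine max_le ?_ (by linarith)
          calc bdist Ω w ≤ bdist Ω ω + dist w ω := infDist_le_infDist_add_dist
            _ ≤ bdist Ω ω + R := add_le_add_right (hRbd w hw) _
        have hNu : 0 < dist (x k) ω + max (bdist Ω (x k)) (bdist Ω ω) :=
          add_pos_of_nonneg_of_pos dist_nonneg (lt_max_iff.2 (Or.inr hδω))
        have hNv : 0 < dist (y k) ω + max (bdist Ω (y k)) (bdist Ω ω) :=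
          add_pos_of_nonneg_of_pos dist_nonneg (lt_max_iff.2 (Or.inr hδω))
        have h1 : Real.log (dist (x k) ω + max (bdist Ω (x k)) (bdist Ω ω)) ≤ Real.log B :=
          Real.log_le_log hNu (by have := hmaxb _ hu; have := hRbd _ hu; rw [hBdef]; linarith)
        have h2 : Real.log (dist (y k) ω + max (bdist Ω (y k)) (bdist Ω ω)) ≤ Real.log B :=
          Real.log_le_log hNv (by have := hmaxb _ hv; have := hRbd _ hv; rw [hBdef]; linarith)
        have hhalf : (0:ℝ) < dist a b / 2 := by linarith
        have h3 : m * Real.log (dist a b) - m * Real.log 2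
            ≤ Real.log (dist (x k) (y k) ^ m + max (bdist Ω (x k)) (bdist Ω (y k))) := by
          have hle : (dist a b / 2) ^ m
              ≤ dist (x k) (y k) ^ m + max (bdist Ω (x k)) (bdist Ω (y k)) := by
            refine le_trans (Real.rpow_le_rpow hhalf.le hk (by linarith)) ?_
            exact le_add_of_nonneg_right (le_max_of_le_left (hδpos _ hu).le)
          have := Real.log_le_log (Real.rpow_pos_of_pos hhalf m) hle
          rwa [Real.log_rpow hhalf, Real.log_div hrpos.ne' two_ne_zero, mul_sub] at this
        have hlogC₂ : Real.log C₂ = 2 * Real.log B - Real.log (bdist Ω ω) + 3 * C₀ / 2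
            + m * Real.log 2 := by rw [hC₂def, Real.log_exp]
        linarith
      have hls : limsup (fun k => (gromovProd d ω (x k) (y k) : EReal)) atTop
          ≤ ((Real.log C₂ - m * Real.log (dist a b) : ℝ) : EReal) :=
        limsup_le_of_le (by isBoundedDefault)
          (hev.mono fun k hk => EReal.coe_le_coe_iff.2 hk)
      have hneg : ((m * Real.log (dist a b) - Real.log C₂ : ℝ) : EReal)
          ≤ -limsup (fun k => (gromovProd d ω (x k) (y k) : EReal)) atTop := by
        rw [show (m * Real.log (dist a b) - Real.log C₂ : ℝ)
            = -(Real.log C₂ - m * Real.log (dist a b)) by ring, EReal.coe_neg]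
        exact EReal.neg_le_neg_iff.2 hls
      refine le_trans (le_of_eq ?_) (EReal.exp_monotone hneg)
      rw [EReal.exp_coe]
      congr 1
      rw [Real.exp_sub, hC₂def, Real.exp_log (Real.exp_pos _)]
      congr 1
      rw [Real.rpow_def_of_pos hrpos, mul_comm]
  · -- liminf estimate
    rcases eq_or_ne (dist a b) 0 with hr | hr
    · have hsum : Tendsto
          (fun k => dist (x k) (y k) + max (bdist Ω (x k)) (bdist Ω (y k))) atTop (𝓝 0) := by
        have := hdist.add hmaxδ
        rw [hr, add_zero] at this
        exact this
      have hLtop : liminf (fun k => (gromovProd d ω (x k) (y k) : EReal)) atTop = ⊤ := by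
        rw [EReal.eq_top_iff_forall_lt]
        intro M
        have hεpos : (0:ℝ) < Real.exp (Real.log (bdist Ω ω) - 3 * C₀ / 2 - (M + 1)) :=
          Real.exp_pos _
        have hev : ∀ᶠ k in atTop, ((M + 1 : ℝ) : EReal)
            ≤ (gromovProd d ω (x k) (y k) : EReal) := by
          filter_upwards [hsum.eventually (eventually_lt_nhds hεpos)] with k hk
          refine EReal.coe_le_coe_iff.2 ?_
          have hu := hxΩ k; have hv := hyΩ k
          have hNpos : 0 < dist (x k) (y k) + max (bdist Ω (x k)) (bdist Ω (y k)) :=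
            add_pos_of_nonneg_of_pos dist_nonneg (lt_max_iff.2 (Or.inl (hδpos _ hu)))
          have hlog : Real.log (dist (x k) (y k) + max (bdist Ω (x k)) (bdist Ω (y k)))
              ≤ Real.log (bdist Ω ω) - 3 * C₀ / 2 - (M + 1) := by
            have := Real.log_le_log hNpos hk.le
            rwa [Real.log_exp] at this
          have := keyL _ hu _ hv
          linarith
        have h1 : ((M + 1 : ℝ) : EReal)
            ≤ liminf (fun k => (gromovProd d ω (x k) (y k) : EReal)) atTop :=
          le_liminf_of_le (by isBoundedDefault) hev
        exact lt_of_lt_of_le (EReal.coe_lt_coe_iff.2 (by linarith)) h1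
      rw [hLtop]
      simp
    · have hrpos : 0 < dist a b := lt_of_le_of_ne dist_nonneg (Ne.symm hr)
      have hev : ∀ᶠ k in atTop, ((Real.log C₁ - Real.log (dist a b) : ℝ) : EReal)
          ≤ (gromovProd d ω (x k) (y k) : EReal) := by
        filter_upwards [hdist.eventually
            (eventually_lt_nhds (by linarith : dist a b < 3 * dist a b / 2)),
          hmaxδ.eventually (eventually_lt_nhds (by linarith : (0:ℝ) < dist a b / 2))]
          with k hk1 hk2
        refine EReal.coe_le_coe_iff.2 ?_
        have hu := hxΩ k; have hv := hyΩ k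
        have hNpos : 0 < dist (x k) (y k) + max (bdist Ω (x k)) (bdist Ω (y k)) :=
          add_pos_of_nonneg_of_pos dist_nonneg (lt_max_iff.2 (Or.inl (hδpos _ hu)))
        have hlog : Real.log (dist (x k) (y k) + max (bdist Ω (x k)) (bdist Ω (y k)))
            ≤ Real.log 2 + Real.log (dist a b) := by
          have hle : dist (x k) (y k) + max (bdist Ω (x k)) (bdist Ω (y k))
              ≤ 2 * dist a b := by linarith
          have := Real.log_le_log hNpos hle
          rwa [Real.log_mul two_ne_zero hrpos.ne'] at this
        have hlogC₁ : Real.log C₁ = Real.log (bdist Ω ω) - Real.log 2 - 3 * C₀ / 2 := by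
          rw [hC₁def, Real.log_exp]
        have := keyL _ hu _ hv
        linarith
      have hli : ((Real.log C₁ - Real.log (dist a b) : ℝ) : EReal)
          ≤ liminf (fun k => (gromovProd d ω (x k) (y k) : EReal)) atTop :=
        le_liminf_of_le (by isBoundedDefault) hev
      have hneg : -liminf (fun k => (gromovProd d ω (x k) (y k) : EReal)) atTop
          ≤ ((Real.log (dist a b) - Real.log C₁ : ℝ) : EReal) := by
        rw [show (Real.log (dist a b) - Real.log C₁ : ℝ)
            = -(Real.log C₁ - Real.log (dist a b)) by ring, EReal.coe_neg]
        exact EReal.neg_le_neg_iff.2 hli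
      refine le_trans (EReal.exp_monotone hneg) (le_of_eq ?_)
      rw [EReal.exp_coe]
      congr 1
      rw [Real.exp_sub, Real.exp_log hrpos, hC₁def, Real.exp_log (Real.exp_pos _)]
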